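/- (Lemma 1, blocker lemma) Let Ξ be a variable gadget in the instance M'(φ). In any collision-free motion plan for M'(φ) with distance cost d*(M'(φ)), all the agents that traverse Ξ (enter at its entrance and leave at its exit) take the same path through Ξ, namely the one of the two traversal paths of Ξ not taken by Ξ's blocker agent. -/

import Mathlib

/-- A MAPF instance: an undirected graph, a finite set of agents,
and for each agent a start and a goal vertex, with starts pairwise distinct
and goals pairwise distinct. -/
structure MAPF where
  V : Type
  G : SimpleGraph V
  A : Type
  fintypeA : Fintype A
  s : A → V
  t : A → V
  s_inj : Function.Injective s
  t_inj : Function.Injective t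

attribute [instance] MAPF.fintypeA

/-- A feasible trajectory for agent `r`. -/
def MAPF.IsTrajectory (M : MAPF) (r : M.A) (π : ℕ → M.V) : Prop :=
  π 0 = M.s r ∧
  (∃ T : ℕ, ∀ τ : ℕ, T ≤ τ → π τ = M.t r) ∧
  (∀ τ : ℕ, 0 < τ → π (τ - 1) = π τ ∨ M.G.Adj (π (τ - 1)) (π τ))

/-- Length of the induced path `P(r)` (trajectory with consecutive repetitions
compressed): the number of time steps at which the vertex changes. -/
noncomputable def pathLength {V : Type} (π : ℕ → V) : ℕ :=
  {τ : ℕ | 0 < τ ∧ π (τ - 1) ≠ π τ}.ncard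

/-- A motion plan: one trajectory per agent. -/
def MAPF.IsPlan (M : MAPF) (π : M.A → ℕ → M.V) : Prop :=
  ∀ r : M.A, M.IsTrajectory r (π r)

/-- Collision-free: no two agents share a vertex at a time step, and no two agents
traverse the same edge in opposite directions at the same time step. -/
def MAPF.CollisionFree (M : MAPF) (π : M.A → ℕ → M.V) : Prop :=
  ∀ r r' : M.A, r ≠ r' →
    (∀ τ : ℕ, π r τ ≠ π r' τ) ∧
    (∀ τ : ℕ, 0 < τ → ¬(π r (τ - 1) = π r' τ ∧ π r τ = π r' (τ - 1)))

/-- Distance cost of a motion plan: sum of the path lengths of the agents. -/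
noncomputable def MAPF.cost (M : MAPF) (π : M.A → ℕ → M.V) : ℕ :=
  ∑ r : M.A, pathLength (π r)

/-- `d*(M)`: sum over agents of the graph distance from start to goal. -/
noncomputable def MAPF.dStar (M : MAPF) : ℕ :=
  ∑ r : M.A, M.G.dist (M.s r) (M.t r)

open scoped Classical in
/-- The active interval of an agent: from the first time it leaves its start to
the last time it reaches its target; empty if the agent never moves. -/
noncomputable def MAPF.activeInterval (M : MAPF) (r : M.A) (π : ℕ → M.V) : Set ℕ :=
  if {τ : ℕ | π (τ + 1) ≠ M.s r} = ∅ then ∅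
  else Set.Icc (sInf {τ : ℕ | π (τ + 1) ≠ M.s r})
               (sSup {τ : ℕ | 0 < τ ∧ π (τ - 1) ≠ M.t r})

/-- A monotone motion plan: the active intervals of distinct agents are pairwise
disjoint (the agents move one by one, each moving once). -/
def MAPF.MonotonePlan (M : MAPF) (π : M.A → ℕ → M.V) : Prop :=
  ∀ r r' : M.A, r ≠ r' →
    Disjoint (M.activeInterval r (π r)) (M.activeInterval r' (π r'))

/-- A sequential motion plan: at each time step at most one agent changes vertex. -/
def MAPF.SequentialPlan (M : MAPF) (π : M.A → ℕ → M.V) : Prop :=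
  ∀ τ : ℕ, 0 < τ → ∀ r r' : M.A,
    π r (τ - 1) ≠ π r τ → π r' (τ - 1) ≠ π r' τ → r = r'

/-- A literal: a variable index together with a polarity. -/
structure Lit where
  var : ℕ
  positive : Bool
deriving DecidableEq

/-- Evaluation of a literal under an assignment. -/
def Lit.eval (a : ℕ → Bool) (l : Lit) : Bool :=
  if l.positive then a l.var else !(a l.var)

/-- A 3-clause: three literals. -/
abbrev Clause3 := Lit × Lit × Lit

def Clause3.eval (a : ℕ → Bool) (c : Clause3) : Bool :=
  c.1.eval a || c.2.1.eval a || c.2.2.eval a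

/-- A 3-CNF formula: a list of 3-clauses. -/
abbrev CNF3 := List Clause3

def CNF3.Satisfies (a : ℕ → Bool) (φ : CNF3) : Prop :=
  ∀ c ∈ φ, c.eval a = true

def CNF3.Satisfiable (φ : CNF3) : Prop :=
  ∃ a : ℕ → Bool, CNF3.Satisfies a φ

/-- The literal at occurrence `(j, i)`: position `i` of clause `j`. -/
def CNF3.litAt (φ : CNF3) (j : Fin φ.length) (i : Fin 3) : Lit :=
  if i = 0 then (φ.get j).1 else if i = 1 then (φ.get j).2.1 else (φ.get j).2.2

/-- The set of variables of a 3-CNF formula. -/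
def CNF3.vars (φ : CNF3) : Finset ℕ :=
  ((φ.map fun c => [c.1.var, c.2.1.var, c.2.2.var]).flatten).toFinset

lemma CNF3.litAt_var_mem (φ : CNF3) (j : Fin φ.length) (i : Fin 3) :
    (φ.litAt j i).var ∈ φ.vars := by
  have hc : φ.get j ∈ φ := List.get_mem φ j
  simp only [CNF3.vars, List.mem_toFinset, List.mem_flatten, List.mem_map]
  refine ⟨[(φ.get j).1.var, (φ.get j).2.1.var, (φ.get j).2.2.var], ⟨φ.get j, hc, rfl⟩, ?_⟩
  unfold CNF3.litAt
  fin_cases i <;> simp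

/-- The variables of `φ`, as a type (one per variable gadget / blocker agent). -/
abbrev CNF3.Vars (φ : CNF3) : Type := {n : ℕ // n ∈ φ.vars}

/-- Cells of the planar integer grid. -/
abbrev Cell := ℤ × ℤ

/-- The grid graph on a finite set of cells: two cells are adjacent iff their
L¹-distance is 1. -/
def gridGraph (cells : Finset Cell) : SimpleGraph {c : Cell // c ∈ cells} where
  Adj u v := (u.1.1 - v.1.1).natAbs + (u.1.2 - v.1.2).natAbs = 1
  symm := by
    constructor
    intro u v h
    omega
  loopless := by constructor; intro u h; simp at h

/-- The agents of the monotone construction `M(φ)`: one clause agent per clause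
(`Sum.inl`), and one literal agent per literal occurrence (`Sum.inr`). -/
abbrev MonoAgents (φ : CNF3) : Type := Fin φ.length ⊕ (Fin φ.length × Fin 3)

/-- The construction `M(φ)` of the paper (monotone case): a MAPF instance on a
grid graph with 3 rows, built from a room with the clause agents' starts, a
variable gadget for each variable (with two internally disjoint equal-length
shortest entrance-to-exit traversal paths, the top one carrying the starts of
the positive literal agents and the bottom one the starts of the negative
literal agents), and a clause gadget for each clause (its middle row carrying
the targets of the clause's three literal agents and its top row the target of
the clause agent, followed by an empty column that lets the clause agent reach
its target, via a strictly longer path, even when all three literal targets are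
occupied). -/
structure MonoConstruction (φ : CNF3) where
  /-- the cells of the grid graph -/
  cells : Finset Cell
  /-- the grid has 3 rows -/
  threeRows : ∀ c ∈ cells, 0 ≤ c.2 ∧ c.2 ≤ 2
  /-- start/target of the clause agents -/
  sC : Fin φ.length → {c : Cell // c ∈ cells}
  tC : Fin φ.length → {c : Cell // c ∈ cells}
  /-- start/target of the literal agents -/
  sL : Fin φ.length × Fin 3 → {c : Cell // c ∈ cells}
  tL : Fin φ.length × Fin 3 → {c : Cell // c ∈ cells}
  /-- starts are pairwise distinct -/
  starts_inj : Function.Injective (Sum.elim sC sL)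
  /-- targets are pairwise distinct -/
  targets_inj : Function.Injective (Sum.elim tC tL)
  /-- the one-cell entrance of each variable gadget -/
  entrance : φ.Vars → {c : Cell // c ∈ cells}
  /-- the one-cell exit of each variable gadget -/
  exitC : φ.Vars → {c : Cell // c ∈ cells}
  /-- the top traversal path of each variable gadget -/
  topWalk : (v : φ.Vars) → (gridGraph cells).Walk (entrance v) (exitC v)
  /-- the bottom traversal path of each variable gadget -/
  botWalk : (v : φ.Vars) → (gridGraph cells).Walk (entrance v) (exitC v)
  top_isPath : ∀ v, (topWalk v).IsPath
  bot_isPath : ∀ v, (botWalk v).IsPath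
  /-- the top path is a shortest entrance-to-exit path -/
  top_shortest : ∀ v, (topWalk v).length = (gridGraph cells).dist (entrance v) (exitC v)
  /-- the bottom path is a shortest entrance-to-exit path, of the same length -/
  bot_shortest : ∀ v, (botWalk v).length = (gridGraph cells).dist (entrance v) (exitC v)
  /-- the two traversal paths are internally disjoint -/
  internal_disjoint : ∀ v c, c ∈ (topWalk v).support → c ∈ (botWalk v).support →
    c = entrance v ∨ c = exitC v
  /-- the top path runs along the top row of the grid -/
  top_row : ∀ v c, c ∈ (topWalk v).support → c ≠ entrance v → c ≠ exitC v → c.1.2 = 2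
  /-- these are the only two shortest entrance-to-exit traversal paths -/
  two_paths : ∀ v (p : (gridGraph cells).Walk (entrance v) (exitC v)), p.IsPath →
    p.length = (gridGraph cells).dist (entrance v) (exitC v) →
    p = topWalk v ∨ p = botWalk v
  /-- starts of positive literal agents lie on the top path of their variable's gadget -/
  pos_start_on_top : ∀ (j : Fin φ.length) (i : Fin 3), (φ.litAt j i).positive = true →
    sL (j, i) ∈ (topWalk ⟨(φ.litAt j i).var, φ.litAt_var_mem j i⟩).support
  /-- starts of negative literal agents lie on the bottom path of their variable's gadget -/
  neg_start_on_bot : ∀ (j : Fin φ.length) (i : Fin 3), (φ.litAt j i).positive = false →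
    sL (j, i) ∈ (botWalk ⟨(φ.litAt j i).var, φ.litAt_var_mem j i⟩).support
  /-- literal agents' targets are on the middle row (of their clause's gadget) -/
  tL_middleRow : ∀ o, (tL o).1.2 = 1
  /-- clause agents' targets are on the top row (of their clause's gadget) -/
  tC_topRow : ∀ j, (tC j).1.2 = 2
  /-- every shortest path of a clause agent traverses every variable gadget,
  entering at its entrance and leaving at its exit -/
  clause_shortest_traverses : ∀ (j : Fin φ.length) (v : φ.Vars)
    (p : (gridGraph cells).Walk (sC j) (tC j)),
    p.length = (gridGraph cells).dist (sC j) (tC j) →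
    entrance v ∈ p.support ∧ exitC v ∈ p.support
  /-- the empty column: each clause agent can reach its target (via a strictly
  longer path) even when the three literal targets of its clause gadget are occupied -/
  detour : ∀ j : Fin φ.length, ∃ p : (gridGraph cells).Walk (sC j) (tC j),
    (gridGraph cells).dist (sC j) (tC j) < p.length ∧ ∀ i : Fin 3, tL (j, i) ∉ p.support

/-- The MAPF instance determined by the construction `M(φ)`. -/
def MonoConstruction.toMAPF {φ : CNF3} (K : MonoConstruction φ) : MAPF where
  V := {c : Cell // c ∈ K.cells}
  G := gridGraph K.cells
  A := MonoAgents φ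
  fintypeA := inferInstance
  s := Sum.elim K.sC K.sL
  t := Sum.elim K.tC K.tL
  s_inj := K.starts_inj
  t_inj := K.targets_inj

/-- `f` moves at time `τ` (changes vertex from `τ - 1` to `τ`). -/
def IsMoveAt {V : Type} (f : ℕ → V) (τ : ℕ) : Prop := 0 < τ ∧ f (τ - 1) ≠ f τ

/-- The literal agent `o` moves (strictly) after the last clause agent moves. -/
def MovesAfterClauseAgents {φ : CNF3} (K : MonoConstruction φ)
    (π : K.toMAPF.A → ℕ → K.toMAPF.V) (o : Fin φ.length × Fin 3) : Prop :=
  ∀ (j : Fin φ.length) (τ τ' : ℕ),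
    IsMoveAt (π (Sum.inl j)) τ → IsMoveAt (π (Sum.inr o)) τ' → τ < τ'

/-- The agents of the non-monotone construction `M'(φ)`: clause agents, literal
agents, and one blocker agent per variable gadget. -/
abbrev NonMonoAgents (φ : CNF3) : Type :=
  Fin φ.length ⊕ (Fin φ.length × Fin 3) ⊕ φ.Vars

/-- The construction `M'(φ)` of the paper: `M(φ)` augmented with a blocker agent
for each variable gadget, starting at the gadget's entrance with the gadget's
exit as its target; the top and bottom traversal paths are its only shortest
paths, and the gadget contains cells off both traversal paths available as
intermediate stops for the blocker. -/
structure NonMonoConstruction (φ : CNF3) extends MonoConstruction φ where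
  /-- starts (now including blocker starts = gadget entrances) are pairwise distinct -/
  starts_inj' : Function.Injective (Sum.elim sC (Sum.elim sL entrance))
  /-- targets (now including blocker targets = gadget exits) are pairwise distinct -/
  targets_inj' : Function.Injective (Sum.elim tC (Sum.elim tL exitC))
  /-- each gadget contains cells off both traversal paths, available as
  intermediate stops for the blocker -/
  off_path_cell : ∀ v : φ.Vars, ∃ c : {c : Cell // c ∈ cells},
    c ∉ (topWalk v).support ∧ c ∉ (botWalk v).support ∧
    (gridGraph cells).Reachable (entrance v) c

/-- The MAPF instance determined by the construction `M'(φ)`. -/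
def NonMonoConstruction.toMAPF {φ : CNF3} (K : NonMonoConstruction φ) : MAPF where
  V := {c : Cell // c ∈ K.cells}
  G := gridGraph K.cells
  A := NonMonoAgents φ
  fintypeA := inferInstance
  s := Sum.elim K.sC (Sum.elim K.sL K.entrance)
  t := Sum.elim K.tC (Sum.elim K.tL K.exitC)
  s_inj := K.starts_inj'
  t_inj := K.targets_inj'

/-- The blocker agent of variable gadget `v` in `M'(φ)`. -/
def blockerAgent {φ : CNF3} (v : φ.Vars) : NonMonoAgents φ := Sum.inr (Sum.inr v)

/-- Agent trajectory `f` traverses variable gadget `v`: it enters at the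
entrance and later leaves at the exit. -/
def TraversesGadget {φ : CNF3} (K : NonMonoConstruction φ)
    (f : ℕ → K.toMAPF.V) (v : φ.Vars) : Prop :=
  ∃ τ₁ τ₂ : ℕ, τ₁ ≤ τ₂ ∧ f τ₁ = K.entrance v ∧ f τ₂ = K.exitC v

/-! In a plan of cost `d*`, every agent moves along a shortest walk from its start to its target,
one vertex per move. Hence the blocker runs along one of the two traversal paths `B`, and any other
agent passes from the entrance to the exit along a shortest walk, that is along one of the two
traversal paths. It cannot be `B`: there the agent starts behind the blocker and ends ahead of it,
and since it advances at most one vertex per step while the blocker never moves back, the two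
would meet. Finally, the vertices of `B` are within distance `d(entrance, exit)` of both ends, so on
the agent's shortest walk they can only occur between its visits to the entrance and to the exit. -/

open SimpleGraph

section MoveCount

variable {V : Type} (f : ℕ → V)

open scoped Classical in
noncomputable def moveCount (τ : ℕ) : ℕ :=
  ((Finset.range τ).filter fun σ => f σ ≠ f (σ + 1)).card

@[simp]
lemma moveCount_zero : moveCount f 0 = 0 := by
  simp [moveCount]

variable {f}

lemma moveCount_succ_of_eq {τ : ℕ} (h : f τ = f (τ + 1)) :
    moveCount f (τ + 1) = moveCount f τ := by
  simp [moveCount, Finset.range_add_one, Finset.filter_insert, h]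

lemma moveCount_succ_of_ne {τ : ℕ} (h : f τ ≠ f (τ + 1)) :
    moveCount f (τ + 1) = moveCount f τ + 1 := by
  simp [moveCount, Finset.range_add_one, Finset.filter_insert, h]

variable (f)

lemma moveCount_succ_le (τ : ℕ) : moveCount f (τ + 1) ≤ moveCount f τ + 1 := by
  by_cases h : f τ = f (τ + 1)
  · simp [moveCount_succ_of_eq h]
  · simp [moveCount_succ_of_ne h]

lemma moveCount_mono : Monotone (moveCount f) := by
  refine monotone_nat_of_le_succ fun τ => ?_
  by_cases h : f τ = f (τ + 1)
  · simp [moveCount_succ_of_eq h]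
  · simp [moveCount_succ_of_ne h]

variable {f}

lemma moveCount_eq_of_le {T τ : ℕ} {x : V} (hT : ∀ σ, T ≤ σ → f σ = x) (h : T ≤ τ) :
    moveCount f τ = moveCount f T := by
  induction τ, h using Nat.le_induction with
  | base => rfl
  | succ τ h ih => rw [moveCount_succ_of_eq (by rw [hT τ h, hT (τ + 1) (by omega)]), ih]

lemma pathLength_eq_moveCount {T : ℕ} {x : V} (hT : ∀ σ, T ≤ σ → f σ = x) :
    pathLength f = moveCount f T := by
  classical
  have hmoves : {τ : ℕ | 0 < τ ∧ f (τ - 1) ≠ f τ} =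
      (· + 1) '' ↑((Finset.range T).filter fun σ => f σ ≠ f (σ + 1)) := by
    ext τ
    simp only [Set.mem_ofPred_eq, Set.mem_image, Finset.coe_filter, Finset.mem_range]
    constructor
    · rintro ⟨hτ, hne⟩
      refine ⟨τ - 1, ⟨?_, by rwa [Nat.sub_add_cancel hτ]⟩, by omega⟩
      by_contra! hle
      exact hne (by rw [hT _ hle, hT τ (by omega)])
    · rintro ⟨σ, ⟨-, hne⟩, rfl⟩
      exact ⟨σ.succ_pos, by simpa using hne⟩
  rw [pathLength, hmoves, Set.ncard_image_of_injective _ (add_left_injective 1),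
    Set.ncard_coe_finset, moveCount]

end MoveCount

section MovesAlong

variable {V : Type} {G : SimpleGraph V}

lemma exists_walk_moveCount {f : ℕ → V} (hstep : ∀ τ, f τ = f (τ + 1) ∨ G.Adj (f τ) (f (τ + 1)))
    (n : ℕ) : ∃ p : G.Walk (f 0) (f n),
      p.length = moveCount f n ∧ ∀ τ ≤ n, f τ = p.getVert (moveCount f τ) := by
  induction n with
  | zero => exact ⟨.nil, by simp, fun τ hτ => by simp [Nat.le_zero.1 hτ]⟩
  | succ n ih =>
    obtain ⟨p, hlen, hp⟩ := ih
    rcases hstep n with heq | hadj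
    · refine ⟨p.copy rfl heq, by simp [hlen, moveCount_succ_of_eq heq], fun τ hτ => ?_⟩
      rcases Nat.lt_succ_iff_lt_or_eq.1 (Nat.lt_succ_of_le hτ) with hτ | rfl
      · simpa using hp τ (by omega)
      · simp [moveCount_succ_of_eq heq, ← heq, hp n le_rfl]
    · have hne : f n ≠ f (n + 1) := hadj.ne
      refine ⟨p.concat hadj, by simp [hlen, moveCount_succ_of_ne hne], fun τ hτ => ?_⟩
      rcases Nat.lt_succ_iff_lt_or_eq.1 (Nat.lt_succ_of_le hτ) with hτ | rfl
      · have hle : moveCount f τ ≤ p.length := hlen ▸ moveCount_mono f (by omega)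
        rw [hp τ (by omega), Walk.concat_eq_append, Walk.getVert_append]
        rcases hle.lt_or_eq with hlt | heq
        · simp [hlt]
        · simp [heq]
      · rw [moveCount_succ_of_ne hne, ← hlen, ← Walk.length_concat p hadj, Walk.getVert_length]

structure MovesAlong {u w : V} (f : ℕ → V) (p : G.Walk u w) : Prop where
  apply_eq : ∀ τ, f τ = p.getVert (moveCount f τ)
  moveCount_le : ∀ τ, moveCount f τ ≤ p.length
  exists_moveCount_eq : ∃ T, moveCount f T = p.length

end MovesAlong

namespace MAPF

variable {M : MAPF}

lemma IsTrajectory.exists_movesAlong {r : M.A} {f : ℕ → M.V} (hf : M.IsTrajectory r f) :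
    ∃ p : M.G.Walk (M.s r) (M.t r), p.length = pathLength f ∧ MovesAlong f p := by
  obtain ⟨h0, ⟨T, hT⟩, hstep⟩ := hf
  obtain ⟨p, hlen, hp⟩ := exists_walk_moveCount (G := M.G) (f := f)
    (fun τ => by simpa using hstep (τ + 1) τ.succ_pos) T
  have hstable : ∀ τ, T ≤ τ → moveCount f τ = p.length := fun τ hτ =>
    hlen ▸ moveCount_eq_of_le hT hτ
  refine ⟨p.copy h0 (hT T le_rfl), by simp [hlen, pathLength_eq_moveCount hT], ?_, ?_, ?_⟩
  · intro τ
    rcases le_total τ T with hτ | hτ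
    · simpa using hp τ hτ
    · simp [hstable τ hτ, hT τ hτ, hT T le_rfl]
  · intro τ
    simpa using (moveCount_mono f (le_max_left τ T)).trans_eq (hstable _ (le_max_right τ T))
  · exact ⟨T, by simpa using hstable T le_rfl⟩

theorem pathLength_eq_dist_of_cost_eq_dStar {π : M.A → ℕ → M.V} (hplan : M.IsPlan π)
    (hopt : M.cost π = M.dStar) (r : M.A) :
    pathLength (π r) = M.G.dist (M.s r) (M.t r) := by
  have hle : ∀ r ∈ Finset.univ, M.G.dist (M.s r) (M.t r) ≤ pathLength (π r) := fun r _ => by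
    obtain ⟨p, hlen, -⟩ := (hplan r).exists_movesAlong
    exact hlen ▸ SimpleGraph.dist_le p
  exact ((Finset.sum_eq_sum_iff_of_le hle).1 hopt.symm r (Finset.mem_univ r)).symm

theorem exists_shortest_movesAlong_of_cost_eq_dStar {π : M.A → ℕ → M.V} (hplan : M.IsPlan π)
    (hopt : M.cost π = M.dStar) (r : M.A) :
    ∃ p : M.G.Walk (M.s r) (M.t r), p.length = M.G.dist (M.s r) (M.t r) ∧ MovesAlong (π r) p := by
  obtain ⟨p, hlen, hp⟩ := (hplan r).exists_movesAlong
  exact ⟨p, hlen.trans (pathLength_eq_dist_of_cost_eq_dStar hplan hopt r), hp⟩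

end MAPF

theorem exists_eq_of_le_add_one_of_monotone {R S : ℕ → ℕ} (hR : ∀ n, R (n + 1) ≤ R n + 1)
    (hS : Monotone S) {a b : ℕ} (hab : a ≤ b) (ha : R a ≤ S a) (hb : S b ≤ R b) :
    ∃ n ∈ Set.Icc a b, R n = S n := by
  induction b, hab using Nat.le_induction with
  | base => exact ⟨a, ⟨le_rfl, le_rfl⟩, le_antisymm ha hb⟩
  | succ b hab ih =>
    by_cases hbR : S b ≤ R b
    · obtain ⟨n, ⟨han, hnb⟩, hn⟩ := ih hbR
      exact ⟨n, ⟨han, hnb.trans b.le_succ⟩, hn⟩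
    · have := hR b
      have := hS (Nat.le_add_right b 1)
      exact ⟨b + 1, ⟨hab.trans b.le_succ, le_rfl⟩, by omega⟩

namespace SimpleGraph.Walk

variable {V : Type*} {G : SimpleGraph V} {s t : V}

theorem dist_getVert_getVert_of_length_eq_dist {p : G.Walk s t} (hp : p.length = G.dist s t)
    {a b : ℕ} (hab : a ≤ b) (hb : b ≤ p.length) :
    G.dist (p.getVert a) (p.getVert b) = b - a := by
  have h := length_eq_dist_of_subwalk hp ((isSubwalk_take _ (b - a)).trans (isSubwalk_drop p a))
  rw [take_length, drop_length, drop_getVert, Nat.add_sub_cancel' hab] at h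
  omega

theorem mem_Icc_of_dist_getVert_le {p : G.Walk s t} (hp : p.length = G.dist s t)
    {a b k : ℕ} (hab : a ≤ b) (hb : b ≤ p.length) (hk : k ≤ p.length)
    (hak : G.dist (p.getVert a) (p.getVert k) ≤ b - a)
    (hkb : G.dist (p.getVert k) (p.getVert b) ≤ b - a) : k ∈ Set.Icc a b := by
  constructor
  · by_contra! hka
    have := dist_getVert_getVert_of_length_eq_dist hp (hka.le.trans hab) hb
    omega
  · by_contra! hbk
    have := dist_getVert_getVert_of_length_eq_dist hp (hab.trans hbk.le) hk
    omega

end SimpleGraph.Walk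

section Passage

variable {V : Type} {G : SimpleGraph V} {u w : V}

theorem exists_apply_eq_getVert_of_window {f : ℕ → V} {p : G.Walk u w} {κ : ℕ → ℕ}
    (hκ : ∀ τ, κ (τ + 1) ≤ κ τ + 1) {τ₁ τ₂ i : ℕ} (h₁₂ : τ₁ ≤ τ₂)
    (hf : ∀ τ ∈ Set.Icc τ₁ τ₂, f τ = p.getVert (κ τ)) (h₁ : κ τ₁ ≤ i) (h₂ : i ≤ κ τ₂) :
    ∃ τ, f τ = p.getVert i := by
  obtain ⟨τ, hτ, hκτ⟩ :=
    exists_eq_of_le_add_one_of_monotone (S := fun _ => i) hκ monotone_const h₁₂ h₁ h₂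
  exact ⟨τ, hκτ ▸ hf τ hτ⟩

theorem MovesAlong.exists_apply_eq_of_mem_support {f : ℕ → V} {p : G.Walk u w}
    (hf : MovesAlong f p) {x : V} (hx : x ∈ p.support) : ∃ τ, f τ = x := by
  obtain ⟨i, rfl, hi⟩ := Walk.mem_support_iff_exists_getVert.1 hx
  obtain ⟨T, hT⟩ := hf.exists_moveCount_eq
  exact exists_apply_eq_getVert_of_window (moveCount_succ_le f) (Nat.zero_le T)
    (fun τ _ => hf.apply_eq τ) (by simp) (hT ▸ hi)

theorem MovesAlong.exists_eq_of_traverse {b f : ℕ → V} {p : G.Walk u w} (hb : MovesAlong b p)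
    {κ : ℕ → ℕ} (hκ : ∀ τ, κ (τ + 1) ≤ κ τ + 1) {τ₁ τ₂ : ℕ} (h₁₂ : τ₁ ≤ τ₂)
    (hf : ∀ τ ∈ Set.Icc τ₁ τ₂, f τ = p.getVert (κ τ)) (h₁ : κ τ₁ = 0) (h₂ : κ τ₂ = p.length) :
    ∃ τ, f τ = b τ := by
  obtain ⟨τ, hτ, hκτ⟩ := exists_eq_of_le_add_one_of_monotone hκ (moveCount_mono b) h₁₂
    (h₁ ▸ Nat.zero_le _) (h₂ ▸ hb.moveCount_le τ₂)
  exact ⟨τ, by rw [hf τ hτ, hκτ, ← hb.apply_eq]⟩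

theorem MovesAlong.exists_passage {b f : ℕ → V} {s t : V} {B : G.Walk u w} {p : G.Walk s t}
    (hf : MovesAlong f p) (hp : p.length = G.dist s t)
    (hb : MovesAlong b B) (hB : B.length = G.dist u w) (hfb : ∀ τ, f τ ≠ b τ)
    {τ₁ τ₂ : ℕ} (h₁₂ : τ₁ ≤ τ₂) (hu : f τ₁ = u) (hw : f τ₂ = w) :
    ∃ W : G.Walk u w, W.length = G.dist u w ∧ W ≠ B ∧ (∀ x ∈ W.support, ∃ τ, f τ = x) ∧
      ∀ τ, f τ ∈ B.support → f τ ∈ W.support := by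
  classical
  set a := moveCount f τ₁
  set c := moveCount f τ₂
  have hac : a ≤ c := moveCount_mono f h₁₂
  have hc : c ≤ p.length := hf.moveCount_le τ₂
  have hpa : p.getVert a = u := hu ▸ (hf.apply_eq τ₁).symm
  have hpc : p.getVert c = w := hw ▸ (hf.apply_eq τ₂).symm
  have hdist : G.dist u w = c - a :=
    hpa ▸ hpc ▸ Walk.dist_getVert_getVert_of_length_eq_dist hp hac hc
  let W : G.Walk u w := ((p.drop a).take (c - a)).copy hpa
    (by rw [Walk.drop_getVert, Nat.add_sub_cancel' hac, hpc])
  have hWlen : W.length = c - a := by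
    simp only [W, Walk.length_copy, Walk.take_length, Walk.drop_length]
    omega
  have hWget : ∀ k ∈ Set.Icc a c, W.getVert (k - a) = p.getVert k := fun k ⟨hak, hkc⟩ => by
    simp [W, Nat.add_sub_cancel' hak, min_eq_right (Nat.sub_le_sub_right hkc a)]
  have hwindow : ∀ τ ∈ Set.Icc τ₁ τ₂, f τ = W.getVert (moveCount f τ - a) :=
    fun τ ⟨h₁, h₂⟩ => by rw [hWget _ ⟨moveCount_mono f h₁, moveCount_mono f h₂⟩, ← hf.apply_eq]
  have hκ : ∀ τ, moveCount f (τ + 1) - a ≤ moveCount f τ - a + 1 := fun τ => by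
    have := moveCount_succ_le f τ
    omega
  refine ⟨W, hWlen.trans hdist.symm, fun hWB => ?_, fun x hx => ?_, fun τ hτ => ?_⟩
  · obtain ⟨τ, hτ⟩ := (hWB ▸ hb).exists_eq_of_traverse hκ h₁₂ hwindow (by simp [a]) (by omega)
    exact hfb τ hτ
  · obtain ⟨i, rfl, hi⟩ := Walk.mem_support_iff_exists_getVert.1 hx
    exact exists_apply_eq_getVert_of_window hκ h₁₂ hwindow (by simp [a]) (by omega)
  · have hdu : G.dist u (f τ) ≤ c - a :=
      hdist ▸ hB ▸ (dist_le _).trans (B.length_takeUntil_le_length hτ)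
    have hdw : G.dist (f τ) w ≤ c - a :=
      hdist ▸ hB ▸ (dist_le _).trans (B.length_dropUntil_le_length hτ)
    rw [hf.apply_eq τ] at hdu hdw ⊢
    have hk := Walk.mem_Icc_of_dist_getVert_le hp hac hc (hf.moveCount_le τ)
      (hpa ▸ hdu) (hpc ▸ hdw)
    exact hWget _ hk ▸ W.getVert_mem_support _

end Passage

/-- Lemma 1, blocker lemma: in any collision-free motion plan for
`M'(φ)` with distance cost `d*(M'(φ))`, for every variable gadget all the agents
that traverse the gadget take the same path through it, namely the one of the
two traversal paths not taken by the gadget's blocker agent. -/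
theorem blocker_lemma (φ : CNF3) (K : NonMonoConstruction φ)
    (π : K.toMAPF.A → ℕ → K.toMAPF.V)
    (hplan : K.toMAPF.IsPlan π) (hcf : K.toMAPF.CollisionFree π)
    (hopt : K.toMAPF.cost π = K.toMAPF.dStar) (v : φ.Vars) :
    ∃ B Q : (gridGraph K.cells).Walk (K.entrance v) (K.exitC v),
      ((B = K.topWalk v ∧ Q = K.botWalk v) ∨ (B = K.botWalk v ∧ Q = K.topWalk v)) ∧
      -- the blocker takes the traversal path `B`
      (∀ c ∈ B.support, ∃ τ : ℕ, π (blockerAgent v) τ = c) ∧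
      -- every other agent traversing the gadget takes the traversal path `Q`
      (∀ r : K.toMAPF.A, r ≠ blockerAgent v → TraversesGadget K (π r) v →
        (∀ c ∈ Q.support, ∃ τ : ℕ, π r τ = c) ∧
        (∀ c ∈ B.support, c ≠ K.entrance v → c ≠ K.exitC v → ∀ τ : ℕ, π r τ ≠ c)) := by
  choose P hPlen hP using MAPF.exists_shortest_movesAlong_of_cost_eq_dStar hplan hopt
  obtain ⟨B, hBlen, hB⟩ : ∃ B : (gridGraph K.cells).Walk (K.entrance v) (K.exitC v),
      B.length = (gridGraph K.cells).dist (K.entrance v) (K.exitC v) ∧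
        MovesAlong (π (blockerAgent v)) B :=
    ⟨P (blockerAgent v), hPlen _, hP _⟩
  obtain ⟨Q, hBQ⟩ :
      ∃ Q, (B = K.topWalk v ∧ Q = K.botWalk v) ∨ (B = K.botWalk v ∧ Q = K.topWalk v) := by
    rcases K.two_paths v B (B.isPath_of_length_eq_dist hBlen) hBlen with h | h
    exacts [⟨_, .inl ⟨h, rfl⟩⟩, ⟨_, .inr ⟨h, rfl⟩⟩]
  refine ⟨B, Q, hBQ, fun c hc => hB.exists_apply_eq_of_mem_support hc,
    fun r hr ⟨τ₁, τ₂, h₁₂, hu, hw⟩ => ?_⟩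
  obtain ⟨W, hWlen, hWB, hcover, hvisit⟩ := (hP r).exists_passage (hPlen r) hB hBlen
    (hcf r _ hr).1 h₁₂ hu hw
  have hWQ : W = Q := by
    rcases K.two_paths v W (W.isPath_of_length_eq_dist hWlen) hWlen with h | h <;>
      rcases hBQ with ⟨hB', hQ⟩ | ⟨hB', hQ⟩ <;>
      first | exact h.trans hQ.symm | exact absurd (h.trans hB'.symm) hWB
  subst hWQ
  refine ⟨hcover, fun c hcB hce hcx τ hτ => ?_⟩
  have hcW : c ∈ W.support := hτ ▸ hvisit τ (hτ ▸ hcB)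
  rcases hBQ with ⟨rfl, rfl⟩ | ⟨rfl, rfl⟩
  · exact (K.internal_disjoint v c hcB hcW).elim hce hcx
  · exact (K.internal_disjoint v c hcW hcB).elim hce hcx
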